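/- arXiv:2512.04675 — 2 statements merged into one kernel-verified Lean document; each statement's English description precedes it below -/
import Mathlib

section
/- Let F₁, …, F₇ be bijections of 𝔽₂¹²⁸ such that each Fᵢ has algebraic degree at most 3 and each inverse Fᵢ⁻¹ has algebraic degree at most 3, and set E = F₇ ∘ ⋯ ∘ F₁. Then E has algebraic degree at most 126, and for every set I of 127 coordinates and every c : Fin 128 → ZMod 2, the sum over all x in the coordinate-affine set V(I,c) of the vector E(x) equals the zero vector of 𝔽₂¹²⁸. -/
open Finset MvPolynomial



abbrev Vc (n : ℕ) (I : Finset (Fin n)) (c : Fin n → ZMod 2) : Finset (Fin n → ZMod 2) :=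
  Finset.univ.filter (fun x => ∀ i ∉ I, x i = c i)

lemma zmod2_cases (a : ZMod 2) : a = 0 ∨ a = 1 := by revert a; decide

lemma monom_sum_zero {n : ℕ} (I : Finset (Fin n)) (c : Fin n → ZMod 2)
    (m : Fin n →₀ ℕ) (i₀ : Fin n) (hi₀ : i₀ ∈ I) (hm : m i₀ = 0) :
    ∑ x ∈ Vc n I c, ∏ i, x i ^ m i = 0 := by
  apply Finset.sum_involution (fun x _ => Function.update x i₀ (x i₀ + 1))
  · intro x hx
    have : ∏ i, (Function.update x i₀ (x i₀ + 1)) i ^ m i = ∏ i, x i ^ m i := by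
      apply Finset.prod_congr rfl
      intro i _
      rcases eq_or_ne i i₀ with rfl | h
      · simp [hm]
      · simp [Function.update_of_ne h]
    rw [this, CharTwo.add_self_eq_zero]
  · intro x hx _ heq
    have := congrFun heq i₀
    simp at this
  · intro x hx
    funext i
    rcases eq_or_ne i i₀ with rfl | h
    · simp only [Function.update_self]
      have : (1 + 1 : ZMod 2) = 0 := by decide
      rw [add_assoc, this, add_zero]
    · simp [Function.update_of_ne h]
  · intro x hx
    simp only [Finset.mem_filter, Finset.mem_univ, true_and] at hx ⊢
    intro i hi
    rw [Function.update_of_ne (by rintro rfl; exact hi hi₀)]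
    exact hx i hi

lemma zero_sum {n : ℕ} (P : MvPolynomial (Fin n) (ZMod 2)) (I : Finset (Fin n))
    (c : Fin n → ZMod 2) (h : P.totalDegree < I.card) :
    ∑ x ∈ Vc n I c, MvPolynomial.eval x P = 0 := by
  have : ∀ x, MvPolynomial.eval x P
      = ∑ m ∈ P.support, P.coeff m * ∏ i, x i ^ m i := fun x => eval_eq' x P
  simp only [this]
  rw [Finset.sum_comm]
  apply Finset.sum_eq_zero
  intro m hm
  rw [← Finset.mul_sum]
  -- find i₀ ∈ I with m i₀ = 0
  have hdeg : (m.sum fun _ e => e) ≤ P.totalDegree := MvPolynomial.le_totalDegree hm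
  have : ∃ i₀ ∈ I, m i₀ = 0 := by
    by_contra hc
    push_neg at hc
    have h1 : I.card ≤ ∑ i ∈ I, m i := by
      calc I.card = ∑ _i ∈ I, 1 := by simp
      _ ≤ ∑ i ∈ I, m i := Finset.sum_le_sum (fun i hi => Nat.one_le_iff_ne_zero.2 (hc i hi))
    have h2 : ∑ i ∈ I, m i ≤ ∑ i, m i := Finset.sum_le_sum_of_subset (Finset.subset_univ I)
    have h3 : (∑ i, m i) = m.sum fun _ e => e := by
      rw [Finsupp.sum]
      exact (Finset.sum_subset (Finset.subset_univ _) (by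
        intro i _ hi
        simpa using Finsupp.notMem_support_iff.mp hi)).symm
    omega
  obtain ⟨i₀, hi₀, hmi₀⟩ := this
  rw [monom_sum_zero I c m i₀ hi₀ hmi₀, mul_zero]

noncomputable def anf {n : ℕ} (f : (Fin n → ZMod 2) → ZMod 2) : MvPolynomial (Fin n) (ZMod 2) :=
  ∑ I ∈ (Finset.univ : Finset (Fin n)).powerset,
    MvPolynomial.C (∑ x ∈ Vc n I 0, f x) * ∏ i ∈ I, MvPolynomial.X i

lemma prod_eval {n : ℕ} (I : Finset (Fin n)) (x : Fin n → ZMod 2) :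
    (∏ i ∈ I, x i) = if I ⊆ Finset.univ.filter (fun i => x i = 1) then 1 else 0 := by
  split_ifs with h
  · exact Finset.prod_eq_one (fun i hi => by simpa using (Finset.mem_filter.mp (h hi)).2)
  · obtain ⟨i, hiI, hix⟩ : ∃ i ∈ I, x i ≠ 1 := by
      by_contra hc; push_neg at hc
      exact h (fun i hi => Finset.mem_filter.mpr ⟨Finset.mem_univ i, hc i hi⟩)
    have : x i = 0 := (zmod2_cases (x i)).resolve_right hix
    exact Finset.prod_eq_zero hiI this

lemma card_filter_powerset {n : ℕ} (S T : Finset (Fin n)) (hTS : T ⊆ S) :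
    (S.powerset.filter (fun I => T ⊆ I)).card = 2 ^ (S \ T).card := by
  rw [← Finset.card_powerset]
  apply Finset.card_bij' (fun I _ => I \ T) (fun J _ => J ∪ T)
  · intro I hI
    simp only [Finset.mem_filter, Finset.mem_powerset] at hI
    exact Finset.mem_powerset.mpr (Finset.sdiff_subset_sdiff hI.1 le_rfl)
  · intro J hJ
    simp only [Finset.mem_powerset] at hJ
    simp only [Finset.mem_filter, Finset.mem_powerset]
    exact ⟨Finset.union_subset ((hJ.trans (Finset.sdiff_subset))) hTS, Finset.subset_union_right⟩
  · intro I hI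
    simp only [Finset.mem_filter, Finset.mem_powerset] at hI
    exact Finset.sdiff_union_of_subset hI.2
  · intro J hJ
    simp only [Finset.mem_powerset] at hJ
    rw [Finset.union_sdiff_right]
    exact Finset.sdiff_eq_self_of_disjoint (Finset.disjoint_of_subset_left hJ Finset.sdiff_disjoint)

lemma anf_eval {n : ℕ} (f : (Fin n → ZMod 2) → ZMod 2) (x : Fin n → ZMod 2) :
    MvPolynomial.eval x (anf f) = f x := by
  classical
  set S : Finset (Fin n) := Finset.univ.filter (fun i => x i = 1) with hS
  rw [anf]
  simp only [map_sum, map_mul, eval_C, map_prod, eval_X]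
  have step1 : ∀ I ∈ (Finset.univ : Finset (Fin n)).powerset,
      (∑ y ∈ Vc n I 0, f y) * ∏ i ∈ I, x i
      = if I ⊆ S then (∑ y ∈ Vc n I 0, f y) else 0 := by
    intro I _
    rw [prod_eval]
    split_ifs <;> simp
  rw [Finset.sum_congr rfl step1, ← Finset.sum_filter]
  have hfe : (Finset.univ : Finset (Fin n)).powerset.filter (fun I => I ⊆ S) = S.powerset := by
    ext I; simp [Finset.mem_powerset]
  rw [hfe]
  have step2 : ∀ I ∈ S.powerset, (∑ y ∈ Vc n I 0, f y)
      = ∑ y : Fin n → ZMod 2, if Finset.univ.filter (fun i => y i = 1) ⊆ I then f y else 0 := by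
    intro I _
    rw [Finset.sum_filter]
    apply Finset.sum_congr rfl
    intro y _
    congr 1
    simp only [eq_iff_iff]
    constructor
    · intro h i hi
      simp only [Finset.mem_filter, Finset.mem_univ, true_and] at hi
      by_contra hiI
      rw [h i hiI] at hi
      exact (by decide : (0 : ZMod 2) ≠ 1) hi
    · intro h i hiI
      rcases zmod2_cases (y i) with h0 | h1
      · simpa using h0
      · exact absurd (h (Finset.mem_filter.mpr ⟨Finset.mem_univ i, h1⟩)) hiI
  rw [Finset.sum_congr rfl step2, Finset.sum_comm]
  rw [Finset.sum_eq_single x]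
  · rw [← hS, ← Finset.sum_filter]
    have : S.powerset.filter (fun I => S ⊆ I) = {S} := by
      ext I
      simp only [Finset.mem_filter, Finset.mem_powerset, Finset.mem_singleton]
      constructor
      · rintro ⟨h1, h2⟩; exact Finset.Subset.antisymm h1 h2
      · rintro rfl; exact ⟨Finset.Subset.refl S, Finset.Subset.refl S⟩
    rw [this, Finset.sum_singleton]
  · intro y _ hyx
    set T : Finset (Fin n) := Finset.univ.filter (fun i => y i = 1) with hT
    rw [← Finset.sum_filter, Finset.sum_const]
    by_cases hTS : T ⊆ S
    · have hTne : T ≠ S := by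
        intro hEq
        apply hyx
        funext i
        have hmem : (y i = 1) ↔ (x i = 1) := by
          constructor
          · intro h
            have : i ∈ T := by simp [hT, h]
            rw [hEq] at this
            simpa [hS] using this
          · intro h
            have : i ∈ S := by simp [hS, h]
            rw [← hEq] at this
            simpa [hT] using this
        rcases zmod2_cases (y i) with h | h <;> rcases zmod2_cases (x i) with h' | h'
        · rw [h, h']
        · exact absurd (hmem.mpr h') (by rw [h]; decide)
        · exact absurd (hmem.mp h) (by rw [h']; decide)
        · rw [h, h']
      rw [card_filter_powerset S T hTS]
      have hpos : (S \ T).card ≠ 0 := by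
        simp only [ne_eq, Finset.card_eq_zero, Finset.sdiff_eq_empty_iff_subset]
        intro hST
        exact hTne (Finset.Subset.antisymm hTS hST)
      have : (((2 : ℕ) ^ (S \ T).card : ℕ) : ZMod 2) = 0 := by
        rw [Nat.cast_pow, (by decide : ((2 : ℕ) : ZMod 2) = 0), zero_pow hpos]
      rw [nsmul_eq_mul, this, zero_mul]
    · have : S.powerset.filter (fun I => T ⊆ I) = ∅ := by
        apply Finset.filter_false_of_mem
        intro I hI hTI
        exact hTS (hTI.trans (Finset.mem_powerset.mp hI))
      rw [this]
      simp
  · simp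

lemma hasAlgDegLE_def {n : ℕ} (f : (Fin n → ZMod 2) → ZMod 2) (d : ℕ)
    (h : ∀ I : Finset (Fin n), d < I.card → ∑ x ∈ Vc n I 0, f x = 0) :
    ∃ P : MvPolynomial (Fin n) (ZMod 2),
      P.totalDegree ≤ d ∧ ∀ x, MvPolynomial.eval x P = f x := by
  refine ⟨anf f, ?_, anf_eval f⟩
  rw [anf]
  apply (MvPolynomial.totalDegree_finset_sum _ _).trans
  apply Finset.sup_le
  intro I _
  by_cases hI : d < I.card
  · rw [h I hI]
    simp
  · apply (MvPolynomial.totalDegree_mul _ _).trans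
    rw [MvPolynomial.totalDegree_C, zero_add]
    apply le_trans (MvPolynomial.totalDegree_finset_prod _ _)
    calc (∑ i ∈ I, (MvPolynomial.X i : MvPolynomial (Fin n) (ZMod 2)).totalDegree)
        = ∑ _i ∈ I, 1 := by simp [MvPolynomial.totalDegree_X]
      _ = I.card := by simp
      _ ≤ d := not_lt.mp hI

-- composition degree multiplies
lemma comp_deg {n : ℕ} (g : (Fin n → ZMod 2) → ZMod 2)
    (Fm : (Fin n → ZMod 2) → (Fin n → ZMod 2)) (a b : ℕ)
    (hg : ∃ P : MvPolynomial (Fin n) (ZMod 2),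
      P.totalDegree ≤ a ∧ ∀ x, MvPolynomial.eval x P = g x)
    (hF : ∀ j, ∃ Q : MvPolynomial (Fin n) (ZMod 2),
      Q.totalDegree ≤ b ∧ ∀ x, MvPolynomial.eval x Q = Fm x j) :
    ∃ P : MvPolynomial (Fin n) (ZMod 2),
      P.totalDegree ≤ a * b ∧ ∀ x, MvPolynomial.eval x P = g (Fm x) := by
  classical
  obtain ⟨P, hPd, hPe⟩ := hg
  choose Q hQd hQe using hF
  refine ⟨MvPolynomial.bind₁ Q P, ?_, ?_⟩
  · conv_lhs => rw [P.as_sum]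
    rw [map_sum]
    apply (MvPolynomial.totalDegree_finset_sum _ _).trans
    apply Finset.sup_le
    intro m hm
    rw [MvPolynomial.bind₁_monomial]
    apply (MvPolynomial.totalDegree_mul _ _).trans
    rw [MvPolynomial.totalDegree_C, zero_add]
    apply le_trans (MvPolynomial.totalDegree_finset_prod _ _)
    calc ∑ i ∈ m.support, (Q i ^ m i).totalDegree
        ≤ ∑ i ∈ m.support, m i * b := by
          apply Finset.sum_le_sum
          intro i _
          exact (MvPolynomial.totalDegree_pow _ _).trans
            (Nat.mul_le_mul_left _ (hQd i))
      _ = (∑ i ∈ m.support, m i) * b := by rw [Finset.sum_mul]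
      _ ≤ a * b := by
          apply Nat.mul_le_mul_right
          exact le_trans (le_of_eq rfl) (le_trans (MvPolynomial.le_totalDegree hm) hPd)
  · intro x
    have key : ∀ (y : Fin n → ZMod 2) (p : MvPolynomial (Fin n) (ZMod 2)),
        MvPolynomial.aeval (R := ZMod 2) y p = MvPolynomial.eval y p := by
      intro y p
      rw [MvPolynomial.aeval_def, Algebra.algebraMap_self]
      rfl
    have := MvPolynomial.aeval_bind₁ (R := ZMod 2) x Q P
    rw [key, key] at this
    rw [this]
    simp only [key, hQe]
    exact hPe (fun j => Fm x j)

lemma bc_step {n : ℕ} (g : (Fin n → ZMod 2) → ZMod 2)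
    (Fi Gi : (Fin n → ZMod 2) → (Fin n → ZMod 2))
    (hbij : Function.Injective Fi)
    (hleft : Function.LeftInverse Gi Fi)
    (hright : Function.RightInverse Gi Fi)
    (a e d' : ℕ)
    (hg : ∃ P : MvPolynomial (Fin n) (ZMod 2),
      P.totalDegree ≤ a ∧ ∀ x, MvPolynomial.eval x P = g x)
    (hGdeg : ∀ j, ∃ Q : MvPolynomial (Fin n) (ZMod 2),
      Q.totalDegree ≤ e ∧ ∀ x, MvPolynomial.eval x Q = Gi x j)
    (hcond : ∀ k : ℕ, d' < k → k ≤ n → a + e * (n - k) < n) :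
    ∃ P : MvPolynomial (Fin n) (ZMod 2),
      P.totalDegree ≤ d' ∧ ∀ x, MvPolynomial.eval x P = g (Fi x) := by
  classical
  apply hasAlgDegLE_def
  intro I hI
  obtain ⟨Pg, hPgd, hPge⟩ := hg
  choose Q hQd hQe using hGdeg
  -- the polynomial g(y) * ∏_{i ∉ I} (1 + Gi(y) i)
  set R : MvPolynomial (Fin n) (ZMod 2) := Pg * ∏ i ∈ Iᶜ, (1 + Q i) with hR
  have hIcard : I.card ≤ n := by
    simpa using Finset.card_le_card (Finset.subset_univ I)
  have hRdeg : R.totalDegree < n := by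
    apply lt_of_le_of_lt ((MvPolynomial.totalDegree_mul _ _).trans
      (add_le_add hPgd (le_trans (MvPolynomial.totalDegree_finset_prod _ _) ?_)))
    · exact hcond I.card hI hIcard
    · calc ∑ i ∈ Iᶜ, (1 + Q i).totalDegree ≤ ∑ _i ∈ Iᶜ, e := by
            apply Finset.sum_le_sum
            intro i _
            apply le_trans (MvPolynomial.totalDegree_add _ _)
            simpa using hQd i
        _ = e * (n - I.card) := by
            rw [Finset.sum_const, Finset.card_compl, smul_eq_mul, mul_comm]
            congr 1
            simp
  -- rewrite the sum
  have step1 : ∑ x ∈ Vc n I 0, g (Fi x) = ∑ y ∈ (Vc n I 0).image Fi, g y :=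
    (Finset.sum_image (fun x _ y _ h => hbij h)).symm
  have himage : ∀ y, y ∈ (Vc n I 0).image Fi ↔ (∀ i ∉ I, Gi y i = 0) := by
    intro y
    simp only [Finset.mem_image, Finset.mem_filter, Finset.mem_univ, true_and]
    constructor
    · rintro ⟨x, hx, rfl⟩ i hi
      rw [hleft x]
      exact hx i hi
    · intro h
      exact ⟨Gi y, h, hright y⟩
  have step2 : ∑ y ∈ (Vc n I 0).image Fi, g y
      = ∑ y : Fin n → ZMod 2, MvPolynomial.eval y R := by
    rw [show (Vc n I 0).image Fi
        = Finset.univ.filter (fun y => ∀ i ∉ I, Gi y i = 0) by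
      ext y; simp only [Finset.mem_filter, Finset.mem_univ, true_and]; exact himage y]
    rw [Finset.sum_filter]
    apply Finset.sum_congr rfl
    intro y _
    rw [hR]
    simp only [map_mul, MvPolynomial.eval_prod, map_add, map_one, hPge, hQe]
    by_cases hy : ∀ i ∉ I, Gi y i = 0
    · rw [if_pos hy]
      have : ∏ i ∈ Iᶜ, (1 + Gi y i) = 1 := by
        apply Finset.prod_eq_one
        intro i hi
        rw [hy i (Finset.mem_compl.mp hi), add_zero]
      rw [this, mul_one]
    · rw [if_neg hy]
      push_neg at hy
      obtain ⟨i, hiI, hine⟩ := hy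
      have h1 : Gi y i = 1 := (zmod2_cases _).resolve_left hine
      have : ∏ i ∈ Iᶜ, (1 + Gi y i) = 0 := by
        apply Finset.prod_eq_zero (Finset.mem_compl.mpr hiI)
        rw [h1]; decide
      rw [this, mul_zero]
  rw [step1, step2]
  have huniv : (Finset.univ : Finset (Fin n → ZMod 2)) = Vc n Finset.univ 0 := by
    ext y; simp
  rw [huniv]
  apply zero_sum R Finset.univ 0
  simpa using hRdeg


/-- A Boolean function `f : 𝔽₂ⁿ → 𝔽₂` has algebraic degree at most `d`. -/
def HasAlgDegLE {n : ℕ} (f : (Fin n → ZMod 2) → ZMod 2) (d : ℕ) : Prop :=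
  ∃ P : MvPolynomial (Fin n) (ZMod 2),
    P.totalDegree ≤ d ∧ ∀ x, MvPolynomial.eval x P = f x

/-- A vectorial function `F : 𝔽₂ⁿ → 𝔽₂ᵐ` has algebraic degree at most `d`. -/
def VecHasAlgDegLE {n m : ℕ} (F : (Fin n → ZMod 2) → (Fin m → ZMod 2)) (d : ℕ) : Prop :=
  ∀ j : Fin m, HasAlgDegLE (fun x => F x j) d

/-- The new 7-round integral distinguisher for Branch3 of Gleeok-128 with data
complexity `2^127`: seven bijective rounds of degree at most 3, with inverses of degree
at most 3, compose to degree at most `126 < 127`, so over any coordinate-affine set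
with 127 active bits all output bits are balanced. -/
theorem seven_round_branch3_integral_distinguisher
    (F G : Fin 7 → ((Fin 128 → ZMod 2) → (Fin 128 → ZMod 2)))
    (hbij : ∀ i, Function.Bijective (F i))
    (hleft : ∀ i, Function.LeftInverse (G i) (F i))
    (hright : ∀ i, Function.RightInverse (G i) (F i))
    (hF : ∀ i, VecHasAlgDegLE (F i) 3)
    (hG : ∀ i, VecHasAlgDegLE (G i) 3) :
    VecHasAlgDegLE (F 6 ∘ F 5 ∘ F 4 ∘ F 3 ∘ F 2 ∘ F 1 ∘ F 0) 126 ∧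
    ∀ (I : Finset (Fin 128)), I.card = 127 → ∀ c : Fin 128 → ZMod 2,
      ∑ x ∈ Finset.univ.filter (fun x : Fin 128 → ZMod 2 => ∀ i ∉ I, x i = c i),
        (F 6 ∘ F 5 ∘ F 4 ∘ F 3 ∘ F 2 ∘ F 1 ∘ F 0) x = 0 := by
  have d2 : ∀ j, HasAlgDegLE (fun x => F 6 (F 5 x) j) 9 := by
    intro j
    exact comp_deg (fun z => F 6 z j) (F 5) 3 3 (hF 6 j) (hF 5)
  have d3 : ∀ j, HasAlgDegLE (fun x => F 6 (F 5 (F 4 x)) j) 27 := by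
    intro j
    exact comp_deg (fun z => F 6 (F 5 z) j) (F 4) 9 3 (d2 j) (hF 4)
  have d4 : ∀ j, HasAlgDegLE (fun x => F 6 (F 5 (F 4 (F 3 x))) j) 81 := by
    intro j
    exact comp_deg (fun z => F 6 (F 5 (F 4 z)) j) (F 3) 27 3 (d3 j) (hF 3)
  have d5 : ∀ j, HasAlgDegLE (fun x => F 6 (F 5 (F 4 (F 3 (F 2 x)))) j) 112 := by
    intro j
    exact bc_step (fun z => F 6 (F 5 (F 4 (F 3 z))) j) (F 2) (G 2) (hbij 2).1
      (hleft 2) (hright 2) 81 3 112 (d4 j) (hG 2) (by intro k h1 h2; omega)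
  have d6 : ∀ j, HasAlgDegLE (fun x => F 6 (F 5 (F 4 (F 3 (F 2 (F 1 x))))) j) 122 := by
    intro j
    exact bc_step (fun z => F 6 (F 5 (F 4 (F 3 (F 2 z)))) j) (F 1) (G 1) (hbij 1).1
      (hleft 1) (hright 1) 112 3 122 (d5 j) (hG 1) (by intro k h1 h2; omega)
  have d7 : ∀ j, HasAlgDegLE (fun x => F 6 (F 5 (F 4 (F 3 (F 2 (F 1 (F 0 x)))))) j) 126 := by
    intro j
    exact bc_step (fun z => F 6 (F 5 (F 4 (F 3 (F 2 (F 1 z))))) j) (F 0) (G 0) (hbij 0).1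
      (hleft 0) (hright 0) 122 3 126 (d6 j) (hG 0) (by intro k h1 h2; omega)
  refine ⟨d7, ?_⟩
  intro I hI c
  funext j
  rw [Finset.sum_apply]
  obtain ⟨P, hPd, hPe⟩ := d7 j
  calc ∑ x ∈ Finset.univ.filter (fun x : Fin 128 → ZMod 2 => ∀ i ∉ I, x i = c i),
        (F 6 ∘ F 5 ∘ F 4 ∘ F 3 ∘ F 2 ∘ F 1 ∘ F 0) x j
      = ∑ x ∈ Vc 128 I c, MvPolynomial.eval x P := by
        apply Finset.sum_congr rfl
        intro x _
        exact (hPe x).symm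
    _ = 0 := zero_sum P I c (by rw [hI]; omega)
end

section
/- Let E₁ and E₂ each be a composition of 7 bijections of 𝔽₂¹²⁸, where every factor has algebraic degree at most 2 and its inverse has algebraic degree at most 3; let E₃ be a composition of 7 bijections of 𝔽₂¹²⁸, where every factor has algebraic degree at most 3 and its inverse has algebraic degree at most 3. Define E : 𝔽₂¹²⁸ → 𝔽₂¹²⁸ by E(x) = E₁(x) + E₂(x) + E₃(x) (coordinatewise sum in ZMod 2). Then for every set I of 127 coordinates and every c : Fin 128 → ZMod 2, the sum over all x in the coordinate-affine set V(I,c) of the vector E(x) equals the zero vector of 𝔽₂¹²⁸. -/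
/-!
Since `E` is the sum of the three branches, it suffices to bound the algebraic degree of
each branch by `126 < 127 = |I|`: a function of degree `< |I|` sums to zero over `V(I,c)`,
because every monomial misses some free coordinate `i ∈ I` and is therefore invariant
under flipping `xᵢ`.

Forward rounds compose multiplicatively (`2⁶ = 64`, `3⁴ = 81`). The first rounds are
absorbed by the Boura–Canteaut bound: if `F` is a permutation whose inverse has degree `e`,
the ANF coefficient of `g ∘ F` at `S` is
`∑_{x ∈ V(S,0)} g (F x) = ∑_y g y · [F⁻¹ y ∈ V(S,0)]`,
a sum over the whole space of a function of degree `deg g + e (n - |S|)`. It vanishes when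
that is `< n`, so `deg (g ∘ F) ≤ d` as soon as `deg g + e (n - d - 1) < n`. This lifts `64`
to `106` for the quadratic branches, and `81` to `112`, `122`, `126` for the cubic one.
-/

open Finset MvPolynomial

variable {n : ℕ}

-- The paper's `V(I,c)`.
def affineCube (I : Finset (Fin n)) (c : Fin n → ZMod 2) : Finset (Fin n → ZMod 2) :=
  {x | ∀ i ∉ I, x i = c i}

@[simp]
lemma mem_affineCube {I : Finset (Fin n)} {c x : Fin n → ZMod 2} :
    x ∈ affineCube I c ↔ ∀ i ∉ I, x i = c i := by
  simp [affineCube]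

@[simp]
lemma affineCube_univ (c : Fin n → ZMod 2) : affineCube univ c = univ := by
  ext; simp

namespace HasAlgDegLE

variable {f g : (Fin n → ZMod 2) → ZMod 2} {a b : ℕ}

lemma mono (hf : HasAlgDegLE f a) (hab : a ≤ b) : HasAlgDegLE f b :=
  let ⟨P, hP, hPf⟩ := hf
  ⟨P, hP.trans hab, hPf⟩

lemma const (r : ZMod 2) : HasAlgDegLE (fun _ : Fin n → ZMod 2 => r) 0 :=
  ⟨C r, (totalDegree_C r).le, fun _ => eval_C r⟩

lemma add (hf : HasAlgDegLE f a) (hg : HasAlgDegLE g a) :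
    HasAlgDegLE (fun x => f x + g x) a := by
  obtain ⟨P, hP, hPf⟩ := hf
  obtain ⟨Q, hQ, hQg⟩ := hg
  exact ⟨P + Q, (totalDegree_add P Q).trans (max_le hP hQ), fun x => by simp [hPf, hQg]⟩

lemma mul (hf : HasAlgDegLE f a) (hg : HasAlgDegLE g b) :
    HasAlgDegLE (fun x => f x * g x) (a + b) := by
  obtain ⟨P, hP, hPf⟩ := hf
  obtain ⟨Q, hQ, hQg⟩ := hg
  exact ⟨P * Q, (totalDegree_mul P Q).trans (add_le_add hP hQ), fun x => by simp [hPf, hQg]⟩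

lemma prod {ι : Type*} {f : ι → (Fin n → ZMod 2) → ZMod 2} (hf : ∀ i, HasAlgDegLE (f i) a)
    (T : Finset ι) : HasAlgDegLE (fun x => ∏ i ∈ T, f i x) (#T * a) := by
  choose P hP hPf using hf
  refine ⟨∏ i ∈ T, P i, ?_, fun x => by simp [hPf]⟩
  calc (∏ i ∈ T, P i).totalDegree
      ≤ ∑ i ∈ T, (P i).totalDegree := totalDegree_finsetProd T P
    _ ≤ ∑ _i ∈ T, a := sum_le_sum fun i _ => hP i
    _ = #T * a := by rw [sum_const, smul_eq_mul]

lemma comp {m : ℕ} {g : (Fin m → ZMod 2) → ZMod 2}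
    {F : (Fin n → ZMod 2) → (Fin m → ZMod 2)} (hg : HasAlgDegLE g a)
    (hF : VecHasAlgDegLE F b) : HasAlgDegLE (g ∘ F) (a * b) := by
  obtain ⟨P, hP, hPg⟩ := hg
  choose Q hQ hQF using hF
  refine ⟨bind₁ Q P, ?_, fun x => ?_⟩
  · rw [P.as_sum, map_sum]
    refine totalDegree_finsetSum_le fun m hm => ?_
    rw [bind₁_monomial]
    calc (C (P.coeff m) * ∏ j ∈ m.support, Q j ^ m j).totalDegree
        ≤ ∑ j ∈ m.support, (Q j ^ m j).totalDegree := by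
          refine (totalDegree_mul _ _).trans ?_
          rw [totalDegree_C, zero_add]
          exact totalDegree_finsetProd _ _
      _ ≤ ∑ j ∈ m.support, m j * b :=
          sum_le_sum fun j _ => (totalDegree_pow _ _).trans (Nat.mul_le_mul_left _ (hQ j))
      _ = (m.sum fun _ e => e) * b := by rw [Finsupp.sum, sum_mul]
      _ ≤ a * b := Nat.mul_le_mul_right _ ((le_totalDegree hm).trans hP)
  · have hFx : F x = fun j => eval x (Q j) := funext fun j => (hQF j x).symm
    rw [Function.comp_apply, ← hPg, hFx]
    exact aeval_bind₁ x Q P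

end HasAlgDegLE

namespace VecHasAlgDegLE

variable {m : ℕ} {F G : (Fin n → ZMod 2) → (Fin m → ZMod 2)} {a b : ℕ}

lemma mono (hF : VecHasAlgDegLE F a) (hab : a ≤ b) : VecHasAlgDegLE F b :=
  fun j => (hF j).mono hab

lemma add (hF : VecHasAlgDegLE F a) (hG : VecHasAlgDegLE G a) :
    VecHasAlgDegLE (fun x => F x + G x) a :=
  fun j => (hF j).add (hG j)

lemma comp {k : ℕ} {H : (Fin m → ZMod 2) → (Fin k → ZMod 2)} (hH : VecHasAlgDegLE H a)
    (hF : VecHasAlgDegLE F b) : VecHasAlgDegLE (H ∘ F) (a * b) :=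
  fun j => (hH j).comp hF

end VecHasAlgDegLE

lemma sum_affineCube_eq_zero_of_add_single {I : Finset (Fin n)} {i₀ : Fin n} (hi₀ : i₀ ∈ I)
    (c : Fin n → ZMod 2) {g : (Fin n → ZMod 2) → ZMod 2}
    (hg : ∀ x, g (x + Pi.single i₀ 1) = g x) : ∑ x ∈ affineCube I c, g x = 0 := by
  refine sum_involution (fun x _ => x + Pi.single i₀ 1) (fun x _ => ?_) (fun x _ _ => ?_)
    (fun x hx => ?_) (fun x _ => ?_)
  · rw [hg, CharTwo.add_self_eq_zero]
  · simp
  · simp only [mem_affineCube, Pi.add_apply] at hx ⊢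
    intro i hi
    rw [Pi.single_eq_of_ne (ne_of_mem_of_not_mem hi₀ hi).symm, add_zero, hx i hi]
  · rw [add_assoc, ← Pi.single_add, CharTwo.add_self_eq_zero, Pi.single_zero, add_zero]

lemma sum_affineCube_prod_pow_eq_zero {I : Finset (Fin n)} {m : Fin n →₀ ℕ}
    (hm : #m.support < #I) (c : Fin n → ZMod 2) :
    ∑ x ∈ affineCube I c, ∏ i, x i ^ m i = 0 := by
  obtain ⟨i₀, hi₀I, hi₀m⟩ := exists_mem_notMem_of_card_lt_card hm
  refine sum_affineCube_eq_zero_of_add_single hi₀I c fun x => prod_congr rfl fun i _ => ?_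
  obtain rfl | hi := eq_or_ne i i₀
  · rw [Finsupp.notMem_support_iff.mp hi₀m, pow_zero, pow_zero]
  · rw [Pi.add_apply, Pi.single_eq_of_ne hi, add_zero]

theorem HasAlgDegLE.sum_affineCube_eq_zero {f : (Fin n → ZMod 2) → ZMod 2} {d : ℕ}
    (hf : HasAlgDegLE f d) {I : Finset (Fin n)} (hd : d < #I) (c : Fin n → ZMod 2) :
    ∑ x ∈ affineCube I c, f x = 0 := by
  obtain ⟨P, hP, hPf⟩ := hf
  simp_rw [← hPf, eval_eq']
  rw [sum_comm]
  refine sum_eq_zero fun m hm => ?_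
  have hcard : #m.support < #I :=
    calc #m.support = #m.support • 1 := by rw [smul_eq_mul, mul_one]
      _ ≤ m.sum fun _ e => e :=
          card_nsmul_le_sum _ _ _ fun i hi => (Finsupp.mem_support_iff.mp hi).bot_lt
      _ ≤ d := (le_totalDegree hm).trans hP
      _ < #I := hd
  rw [← mul_sum, sum_affineCube_prod_pow_eq_zero hcard c, mul_zero]

theorem VecHasAlgDegLE.sum_affineCube_eq_zero {m : ℕ}
    {F : (Fin n → ZMod 2) → (Fin m → ZMod 2)} {d : ℕ} (hF : VecHasAlgDegLE F d)
    {I : Finset (Fin n)} (hd : d < #I) (c : Fin n → ZMod 2) :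
    ∑ x ∈ affineCube I c, F x = 0 :=
  funext fun j => by
    simpa only [Finset.sum_apply, Pi.zero_apply] using (hF j).sum_affineCube_eq_zero hd c

def bitSupport (x : Fin n → ZMod 2) : Finset (Fin n) := {i | x i ≠ 0}

lemma mem_bitSupport {x : Fin n → ZMod 2} {i : Fin n} : i ∈ bitSupport x ↔ x i ≠ 0 := by
  simp [bitSupport]

lemma bitSupport_injective : Function.Injective (bitSupport (n := n)) := by
  intro x y hxy
  funext i
  have hi : x i ≠ 0 ↔ y i ≠ 0 := by rw [← mem_bitSupport, hxy, mem_bitSupport]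
  revert hi; generalize x i = a; generalize y i = b; revert a b; decide

lemma mem_affineCube_zero {S : Finset (Fin n)} {x : Fin n → ZMod 2} :
    x ∈ affineCube S 0 ↔ bitSupport x ⊆ S := by
  simp only [mem_affineCube, Pi.zero_apply, subset_iff, mem_bitSupport]
  exact forall_congr' fun i => not_imp_comm

lemma prod_eq_ite_subset_bitSupport (x : Fin n → ZMod 2) (S : Finset (Fin n)) :
    ∏ i ∈ S, x i = if S ⊆ bitSupport x then 1 else 0 := by
  have hx : ∀ i, x i = if x i ≠ 0 then 1 else 0 := fun i => by
    generalize x i = a; revert a; decide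
  rw [prod_congr rfl fun i _ => hx i, prod_boole]
  congr 1
  simp only [subset_iff, mem_bitSupport]

lemma card_Icc_cast_zmod_two {α : Type*} [DecidableEq α] (T U : Finset α) :
    (#(Icc T U) : ZMod 2) = if T = U then 1 else 0 := by
  by_cases hTU : T ⊆ U
  · obtain rfl | hne := eq_or_ne T U
    · simp
    · have hlt : #T < #U := card_lt_card (hTU.ssubset_of_ne hne)
      rw [card_Icc_finset hTU, if_neg hne, Nat.cast_pow, Nat.cast_ofNat,
        show (2 : ZMod 2) = 0 from rfl, zero_pow (by omega)]
  · rw [Icc_eq_empty hTU, card_empty, Nat.cast_zero, if_neg fun h => hTU h.subset]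

theorem sum_sum_affineCube_mul_prod (f : (Fin n → ZMod 2) → ZMod 2) (x : Fin n → ZMod 2) :
    ∑ S : Finset (Fin n), (∑ y ∈ affineCube S 0, f y) * ∏ i ∈ S, x i = f x := by
  calc ∑ S : Finset (Fin n), (∑ y ∈ affineCube S 0, f y) * ∏ i ∈ S, x i
      = ∑ S ∈ (bitSupport x).powerset, ∑ y ∈ affineCube S 0, f y := by
        simp_rw [prod_eq_ite_subset_bitSupport, mul_ite, mul_one, mul_zero,
          ← sum_filter]
        congr 1; ext; simp
    _ = ∑ y, ∑ S ∈ Icc (bitSupport y) (bitSupport x), f y :=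
        sum_comm' fun S y => by simp [-mem_affineCube, mem_affineCube_zero, and_comm]
    _ = ∑ y, if y = x then f y else 0 := by
        refine sum_congr rfl fun y _ => ?_
        rw [sum_const, nsmul_eq_mul, card_Icc_cast_zmod_two, ite_mul, one_mul, zero_mul]
        simp only [bitSupport_injective.eq_iff]
    _ = f x := by simp

theorem hasAlgDegLE_of_sum_affineCube_eq_zero {f : (Fin n → ZMod 2) → ZMod 2} {d : ℕ}
    (hf : ∀ S : Finset (Fin n), d < #S → ∑ x ∈ affineCube S 0, f x = 0) :
    HasAlgDegLE f d := by
  refine ⟨∑ S with #S ≤ d, (∑ y ∈ affineCube S 0, f y) • ∏ i ∈ S, X i,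
    totalDegree_finsetSum_le fun S hS => ?_, fun x => ?_⟩
  · calc ((∑ y ∈ affineCube S 0, f y) • ∏ i ∈ S, X i).totalDegree
        ≤ ∑ i ∈ S, (X i : MvPolynomial (Fin n) (ZMod 2)).totalDegree :=
          (totalDegree_smul_le _ _).trans (totalDegree_finsetProd _ _)
      _ = #S := by simp [totalDegree_X]
      _ ≤ d := (mem_filter.mp hS).2
  · rw [← sum_sum_affineCube_mul_prod f x, map_sum, sum_filter_of_ne fun S _ hS => ?_]
    · simp [smul_eval]
    · by_contra hSd
      rw [hf S (by omega)] at hS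
      simp at hS

lemma hasAlgDegLE_ite_mem_affineCube {m : ℕ} {F : (Fin n → ZMod 2) → (Fin m → ZMod 2)}
    {e : ℕ} (hF : VecHasAlgDegLE F e) (I : Finset (Fin m)) (c : Fin m → ZMod 2) :
    HasAlgDegLE (fun x => if F x ∈ affineCube I c then 1 else 0) (#Iᶜ * e) := by
  have hfactor : ∀ a b : ZMod 2, a + (1 + b) = if a = b then 1 else 0 := by decide
  have hfactors (i : Fin m) : HasAlgDegLE (fun x => F x i + (1 + c i)) e :=
    (hF i).add ((HasAlgDegLE.const (1 + c i)).mono e.zero_le)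
  convert HasAlgDegLE.prod hfactors Iᶜ using 2 with x
  simp only [hfactor, prod_boole, mem_compl, mem_affineCube]

theorem HasAlgDegLE.comp_of_leftInverse {g : (Fin n → ZMod 2) → ZMod 2}
    {F F' : (Fin n → ZMod 2) → (Fin n → ZMod 2)} {D e d : ℕ} (hg : HasAlgDegLE g D)
    (hleft : Function.LeftInverse F' F) (hright : Function.RightInverse F' F)
    (hF' : VecHasAlgDegLE F' e) (hd : D + (n - (d + 1)) * e < n) :
    HasAlgDegLE (g ∘ F) d := by
  refine hasAlgDegLE_of_sum_affineCube_eq_zero fun S hS => ?_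
  have hdeg : D + #Sᶜ * e < #(univ : Finset (Fin n)) := by
    have : #Sᶜ * e ≤ (n - (d + 1)) * e :=
      Nat.mul_le_mul_right _ (by rw [card_compl, Fintype.card_fin]; omega)
    rw [card_univ, Fintype.card_fin]
    omega
  calc ∑ x ∈ affineCube S 0, (g ∘ F) x
      = ∑ y with F' y ∈ affineCube S 0, g y :=
        sum_equiv ⟨F, F', hleft, hright⟩ (fun x => by simp [-mem_affineCube, hleft x])
          fun _ _ => rfl
    _ = ∑ y ∈ affineCube univ 0, g y * if F' y ∈ affineCube S 0 then 1 else 0 := by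
        rw [affineCube_univ, sum_filter]; simp_rw [mul_boole]
    _ = 0 := (hg.mul (hasAlgDegLE_ite_mem_affineCube hF' S 0)).sum_affineCube_eq_zero hdeg 0

theorem VecHasAlgDegLE.comp_of_leftInverse {m : ℕ} {G : (Fin n → ZMod 2) → (Fin m → ZMod 2)}
    {F F' : (Fin n → ZMod 2) → (Fin n → ZMod 2)} {D e d : ℕ} (hG : VecHasAlgDegLE G D)
    (hleft : Function.LeftInverse F' F) (hright : Function.RightInverse F' F)
    (hF' : VecHasAlgDegLE F' e) (hd : D + (n - (d + 1)) * e < n) :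
    VecHasAlgDegLE (G ∘ F) d :=
  fun j => (hG j).comp_of_leftInverse hleft hright hF' hd

section Gleeok

variable {R R' : Fin 7 → (Fin 128 → ZMod 2) → (Fin 128 → ZMod 2)}

theorem vecHasAlgDegLE_seven_rounds_quadratic (hleft : ∀ i, Function.LeftInverse (R' i) (R i))
    (hright : ∀ i, Function.RightInverse (R' i) (R i)) (hR : ∀ i, VecHasAlgDegLE (R i) 2)
    (hR' : ∀ i, VecHasAlgDegLE (R' i) 3) :
    VecHasAlgDegLE (R 6 ∘ R 5 ∘ R 4 ∘ R 3 ∘ R 2 ∘ R 1 ∘ R 0) 106 := by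
  have h64 : VecHasAlgDegLE (R 6 ∘ R 5 ∘ R 4 ∘ R 3 ∘ R 2 ∘ R 1) 64 :=
    (hR 6).comp <| (hR 5).comp <| (hR 4).comp <| (hR 3).comp <| (hR 2).comp (hR 1)
  exact h64.comp_of_leftInverse (hleft 0) (hright 0) (hR' 0) (by norm_num)

theorem vecHasAlgDegLE_seven_rounds_cubic (hleft : ∀ i, Function.LeftInverse (R' i) (R i))
    (hright : ∀ i, Function.RightInverse (R' i) (R i)) (hR : ∀ i, VecHasAlgDegLE (R i) 3)
    (hR' : ∀ i, VecHasAlgDegLE (R' i) 3) :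
    VecHasAlgDegLE (R 6 ∘ R 5 ∘ R 4 ∘ R 3 ∘ R 2 ∘ R 1 ∘ R 0) 126 := by
  have h81 : VecHasAlgDegLE (R 6 ∘ R 5 ∘ R 4 ∘ R 3) 81 :=
    (hR 6).comp <| (hR 5).comp <| (hR 4).comp (hR 3)
  have h112 : VecHasAlgDegLE (R 6 ∘ R 5 ∘ R 4 ∘ R 3 ∘ R 2) 112 :=
    h81.comp_of_leftInverse (hleft 2) (hright 2) (hR' 2) (by norm_num)
  have h122 : VecHasAlgDegLE (R 6 ∘ R 5 ∘ R 4 ∘ R 3 ∘ R 2 ∘ R 1) 122 :=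
    h112.comp_of_leftInverse (hleft 1) (hright 1) (hR' 1) (by norm_num)
  exact h122.comp_of_leftInverse (hleft 0) (hright 0) (hR' 0) (by norm_num)

end Gleeok

theorem seven_round_gleeok_integral_distinguisher_general
    (A A' B B' C C' : Fin 7 → ((Fin 128 → ZMod 2) → (Fin 128 → ZMod 2)))
    (hAleft : ∀ i, Function.LeftInverse (A' i) (A i))
    (hAright : ∀ i, Function.RightInverse (A' i) (A i))
    (hA : ∀ i, VecHasAlgDegLE (A i) 2) (hA' : ∀ i, VecHasAlgDegLE (A' i) 3)
    (hBleft : ∀ i, Function.LeftInverse (B' i) (B i))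
    (hBright : ∀ i, Function.RightInverse (B' i) (B i))
    (hB : ∀ i, VecHasAlgDegLE (B i) 2) (hB' : ∀ i, VecHasAlgDegLE (B' i) 3)
    (hCleft : ∀ i, Function.LeftInverse (C' i) (C i))
    (hCright : ∀ i, Function.RightInverse (C' i) (C i))
    (hC : ∀ i, VecHasAlgDegLE (C i) 3) (hC' : ∀ i, VecHasAlgDegLE (C' i) 3)
    (E : (Fin 128 → ZMod 2) → (Fin 128 → ZMod 2))
    (hE : ∀ x, E x = (A 6 ∘ A 5 ∘ A 4 ∘ A 3 ∘ A 2 ∘ A 1 ∘ A 0) x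
                   + (B 6 ∘ B 5 ∘ B 4 ∘ B 3 ∘ B 2 ∘ B 1 ∘ B 0) x
                   + (C 6 ∘ C 5 ∘ C 4 ∘ C 3 ∘ C 2 ∘ C 1 ∘ C 0) x)
    (I : Finset (Fin 128)) (hI : I.card = 127) (c : Fin 128 → ZMod 2) :
    ∑ x ∈ Finset.univ.filter (fun x : Fin 128 → ZMod 2 => ∀ i ∉ I, x i = c i),
      E x = 0 := by
  obtain rfl : E = _ := funext hE
  have hAB : VecHasAlgDegLE _ 126 :=
    ((vecHasAlgDegLE_seven_rounds_quadratic hAleft hAright hA hA').add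
      (vecHasAlgDegLE_seven_rounds_quadratic hBleft hBright hB hB')).mono (by norm_num)
  have hdeg : VecHasAlgDegLE _ 126 :=
    hAB.add (vecHasAlgDegLE_seven_rounds_cubic hCleft hCright hC hC')
  exact hdeg.sum_affineCube_eq_zero (by rw [hI]; norm_num) c

/-- The 7-round integral distinguisher for the full PRF Gleeok-128 with data complexity
`2^127`: the XOR of three parallel 7-round keyed permutations (two of round degree ≤ 2
with inverse round degree ≤ 3, one of round degree ≤ 3 with inverse round degree ≤ 3)
is balanced over any coordinate-affine set with 127 active bits. -/
theorem seven_round_gleeok_integral_distinguisher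
    (A A' B B' C C' : Fin 7 → ((Fin 128 → ZMod 2) → (Fin 128 → ZMod 2)))
    (hAbij : ∀ i, Function.Bijective (A i))
    (hAleft : ∀ i, Function.LeftInverse (A' i) (A i))
    (hAright : ∀ i, Function.RightInverse (A' i) (A i))
    (hA : ∀ i, VecHasAlgDegLE (A i) 2) (hA' : ∀ i, VecHasAlgDegLE (A' i) 3)
    (hBbij : ∀ i, Function.Bijective (B i))
    (hBleft : ∀ i, Function.LeftInverse (B' i) (B i))
    (hBright : ∀ i, Function.RightInverse (B' i) (B i))
    (hB : ∀ i, VecHasAlgDegLE (B i) 2) (hB' : ∀ i, VecHasAlgDegLE (B' i) 3)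
    (hCbij : ∀ i, Function.Bijective (C i))
    (hCleft : ∀ i, Function.LeftInverse (C' i) (C i))
    (hCright : ∀ i, Function.RightInverse (C' i) (C i))
    (hC : ∀ i, VecHasAlgDegLE (C i) 3) (hC' : ∀ i, VecHasAlgDegLE (C' i) 3)
    (E : (Fin 128 → ZMod 2) → (Fin 128 → ZMod 2))
    (hE : ∀ x, E x = (A 6 ∘ A 5 ∘ A 4 ∘ A 3 ∘ A 2 ∘ A 1 ∘ A 0) x
                   + (B 6 ∘ B 5 ∘ B 4 ∘ B 3 ∘ B 2 ∘ B 1 ∘ B 0) x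
                   + (C 6 ∘ C 5 ∘ C 4 ∘ C 3 ∘ C 2 ∘ C 1 ∘ C 0) x)
    (I : Finset (Fin 128)) (hI : I.card = 127) (c : Fin 128 → ZMod 2) :
    ∑ x ∈ Finset.univ.filter (fun x : Fin 128 → ZMod 2 => ∀ i ∉ I, x i = c i),
      E x = 0 :=
  seven_round_gleeok_integral_distinguisher_general A A' B B' C C' hAleft hAright hA hA' hBleft
    hBright hB hB' hCleft hCright hC hC' E hE I hI c
end
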